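/- arXiv:2310.15703 — 4 statements merged into one kernel-verified Lean document; each statement's English description precedes it below -/
import Mathlib

section
/- Let C_1,…,C_s be nonzero F_q-linear subspaces of F_q^m and let A be an s×h matrix over F_q of full rank s, with s ≤ h. For 1 ≤ i ≤ s let 𝒜_i ⊆ F_q^h be the linear code generated by the first i rows of A, and let C = [C_1,…,C_s]·A. Then the minimum distance of C satisfies d(C) ≥ min{ d(C_1)d(𝒜_1), d(C_2)d(𝒜_2), …, d(C_s)d(𝒜_s) }. Moreover, if the codes are nested, C_1 ⊇ C_2 ⊇ ⋯ ⊇ C_s, then equality holds. -/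
/-- Minimum distance (minimum Hamming weight of a nonzero element) of a set of vectors. -/
noncomputable def dminS {F : Type*} [DecidableEq F] [Zero F] {n : Type*} [Fintype n]
    (C : Set (n → F)) : ℕ :=
  sInf { w | ∃ c ∈ C, c ≠ 0 ∧ hammingNorm c = w }

/-- Euclidean dual of a set of vectors. -/
def dualE {F : Type*} [Field F] {n : Type*} [Fintype n] (C : Set (n → F)) : Set (n → F) :=
  { x | ∀ c ∈ C, ∑ j, x j * c j = 0 }

/-- Hermitian dual (with respect to x ↦ x^q) of a set of vectors over F_{q^2}. -/
def dualH {F : Type*} [Field F] {n : Type*} [Fintype n] (q : ℕ) (C : Set (n → F)) :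
    Set (n → F) :=
  { x | ∀ c ∈ C, ∑ j, x j * (c j) ^ q = 0 }

/-- The matrix-product code `[C_1,…,C_s]·A` as a set of vectors indexed by `Fin h × Fin m`. -/
def mpcSet {F : Type*} [Field F] {s h m : ℕ}
    (C : Fin s → Set (Fin m → F)) (A : Matrix (Fin s) (Fin h) F) :
    Set (Fin h × Fin m → F) :=
  { p | ∃ v : Fin s → Fin m → F, (∀ i, v i ∈ C i) ∧ ∀ x, p x = ∑ i, A i x.1 * v i x.2 }

/-- A matrix is non-singular by columns. -/
def IsNSC {F : Type*} [Field F] {s h : ℕ} (A : Matrix (Fin s) (Fin h) F) : Prop :=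
  ∀ (i : ℕ) (hi : i ≤ s), 0 < i → ∀ c : Fin i → Fin h, StrictMono c →
    (Matrix.of fun r t : Fin i => A (Fin.castLE hi r) (c t)).det ≠ 0

/-- Punctured code: projection of `C` onto the coordinates in `R`. -/
def punct {F : Type*} {n : Type*} (C : Set (n → F)) (R : Finset n) :
    Set ({x // x ∈ R} → F) :=
  (fun c (t : {x // x ∈ R}) => c t.1) '' C

/-- `R` is an (r,δ)-extended recovery set for coordinate `i` of the code `C`. -/
def IsRecSet {F : Type*} [DecidableEq F] [Zero F] {n : Type*} [Fintype n]
    (C : Set (n → F)) (r δ : ℕ) (i : n) (R : Finset n) : Prop :=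
  i ∈ R ∧ R.card ≤ r + δ - 1 ∧ δ ≤ dminS (punct C R)

/-- `C` is a locally recoverable code with locality (r,δ). -/
def IsLRC {F : Type*} [DecidableEq F] [Zero F] {n : Type*} [Fintype n]
    (C : Set (n → F)) (r δ : ℕ) : Prop :=
  ∀ i : n, ∃ R : Finset n, IsRecSet C r δ i R

/-- `wv α i` is the evaluation of the monomial `X^(i-1)` at all points of the field,
enumerated by `α`. -/
def wv {F : Type*} [Field F] {q : ℕ} (α : Fin q ≃ F) (i : ℕ) : Fin q → F :=
  fun j => (α j) ^ (i - 1)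

/-- `av α p i` : the vectors `a_i`, with `a_i = w_i` for `i < q` and
`a_q = w_q + ((p-1)/2) • w_1`. -/
def av {F : Type*} [Field F] {q : ℕ} (α : Fin q ≃ F) (p : ℕ) (i : ℕ) : Fin q → F :=
  if i = q then wv α q + (((p - 1) / 2 : ℕ) : F) • wv α 1 else wv α i

/-- The square matrix whose rows are `a_1, …, a_q`. -/
def Adot {F : Type*} [Field F] {q : ℕ} (α : Fin q ≃ F) (p : ℕ) : Matrix (Fin q) (Fin q) F :=
  Matrix.of fun r j => av α p ((r : ℕ) + 1) j

/-
If `p = Σ_i A_i ⊗ v_i` is a nonzero codeword and `ℓ` is the largest index with `v_ℓ ≠ 0`,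
then for every coordinate `y` of the support of `v_ℓ` the column `p(·, y) = Σ_{j ≤ ℓ} v_j(y) A_j`
is a nonzero word of `𝒜_ℓ` (the rows of `A` are independent), so `p` has at least
`wt(v_ℓ) · d(𝒜_ℓ) ≥ d(C_ℓ) d(𝒜_ℓ)` nonzero entries. For nested codes the bound is attained by
a tensor `a ⊗ c` with `a` of minimal weight in `𝒜_i` and `c` of minimal weight in `C_i`: writing
`a = Σ_{j ≤ i} w_j A_j`, it is the codeword of `(w_j c)_j`, and `w_j c ∈ C_j` as `C_i ⊆ C_j`.
-/

open Finset

lemma mul_prod_ne_zero {R κ μ : Type*} [MulZeroClass R] [NoZeroDivisors R] {a : κ → R}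
    {b : μ → R} (ha : a ≠ 0) (hb : b ≠ 0) : (fun x : κ × μ => a x.1 * b x.2) ≠ 0 := by
  obtain ⟨t, ht⟩ := Function.ne_iff.mp ha
  obtain ⟨y, hy⟩ := Function.ne_iff.mp hb
  exact Function.ne_iff.mpr ⟨(t, y), mul_ne_zero ht hy⟩

section HammingWeight

variable {F : Type*} [DecidableEq F]

lemma dminS_le_hammingNorm [Zero F] {n : Type*} [Fintype n] {C : Set (n → F)} {c : n → F}
    (hc : c ∈ C) (h0 : c ≠ 0) : dminS C ≤ hammingNorm c :=
  Nat.sInf_le ⟨c, hc, h0, rfl⟩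

lemma exists_hammingNorm_eq_dminS [Zero F] {n : Type*} [Fintype n] {C : Set (n → F)}
    (h : ∃ c ∈ C, c ≠ 0) : ∃ c ∈ C, c ≠ 0 ∧ hammingNorm c = dminS C := by
  obtain ⟨c, hc, h0⟩ := h
  exact Nat.sInf_mem (s := {w | ∃ c ∈ C, c ≠ 0 ∧ hammingNorm c = w}) ⟨_, c, hc, h0, rfl⟩

lemma hammingNorm_mul_prod [MulZeroClass F] [NoZeroDivisors F] {κ μ : Type*}
    [Fintype κ] [Fintype μ] (a : κ → F) (b : μ → F) :
    hammingNorm (fun x : κ × μ => a x.1 * b x.2) = hammingNorm a * hammingNorm b := by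
  classical
  simp only [hammingNorm, ← card_product]
  congr 1
  ext
  simp

lemma hammingNorm_eq_sum_hammingNorm_col [Zero F] {κ μ : Type*} [Fintype κ] [Fintype μ]
    (p : κ × μ → F) : hammingNorm p = ∑ y, hammingNorm (fun t => p (t, y)) := by
  simp only [hammingNorm, card_filter]
  exact Fintype.sum_prod_type_right _

end HammingWeight

namespace Matrix

variable {R : Type*} {ι κ : Type*}

lemma linearIndependent_row_of_rank_eq [Field R] [Fintype ι] [Fintype κ] {A : Matrix ι κ R}
    (hA : A.rank = Fintype.card ι) : LinearIndependent R A.row :=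
  linearIndependent_iff_card_eq_finrank_span.mpr <| by
    rw [Set.finrank, ← rank_eq_finrank_span_row, hA]

variable [CommSemiring R] [LinearOrder ι]

/-- The code `𝒜_i` generated by the first rows of `A`. -/
def leadingRowSpan (A : Matrix ι κ R) (i : ι) : Submodule R (κ → R) :=
  Submodule.span R {x | ∃ j, j ≤ i ∧ x = fun t => A j t}

lemma mem_leadingRowSpan_iff [Fintype ι] {A : Matrix ι κ R} {i : ι} {a : κ → R} :
    a ∈ leadingRowSpan A i ↔ ∃ w : ι → R, (∀ j, i < j → w j = 0) ∧ w ᵥ* A = a := by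
  classical
  have hset :
      {x | ∃ j, j ≤ i ∧ x = fun t => A j t} = (fun j => A j) '' ↑(univ.filter (· ≤ i)) := by
    ext x
    simp [eq_comm]
  rw [leadingRowSpan, hset]
  simp only [Submodule.mem_span_image_finset_iff_exists_fun', sum_filter]
  constructor
  · rintro ⟨c, rfl⟩
    refine ⟨fun j => if j ≤ i then c j else 0, fun j hj => if_neg (not_le.mpr hj), ?_⟩
    simp only [vecMul_eq_sum, ite_smul, zero_smul]
  · rintro ⟨w, hw, rfl⟩
    refine ⟨w, ?_⟩
    rw [vecMul_eq_sum]
    refine sum_congr rfl fun j _ => ?_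
    rcases le_or_gt j i with hj | hj
    · exact if_pos hj
    · rw [if_neg (not_le.mpr hj), hw j hj, zero_smul]

lemma row_mem_leadingRowSpan (A : Matrix ι κ R) (i : ι) : A i ∈ leadingRowSpan A i :=
  Submodule.subset_span ⟨i, le_rfl, rfl⟩

end Matrix

open Matrix

section MatrixProductCode

variable {F : Type*} [Field F] {s h m : ℕ}

lemma col_eq_vecMul {ι κ μ : Type*} [Fintype ι] {A : Matrix ι κ F} {v : ι → μ → F}
    {p : κ × μ → F} (hp : ∀ x, p x = ∑ i, A i x.1 * v i x.2) (y : μ) :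
    (fun t => p (t, y)) = (fun i => v i y) ᵥ* A := by
  funext t
  simp [hp, vecMul, dotProduct, mul_comm]

lemma mul_prod_mem_mpcSet {C : Fin s → Submodule F (Fin m → F)}
    {A : Matrix (Fin s) (Fin h) F} {i : Fin s} {a : Fin h → F} {c : Fin m → F}
    (ha : a ∈ leadingRowSpan A i) (hc : ∀ j ≤ i, c ∈ C j) :
    (fun x : Fin h × Fin m => a x.1 * c x.2) ∈ mpcSet (fun j => (C j : Set (Fin m → F))) A := by
  obtain ⟨w, hw, rfl⟩ := mem_leadingRowSpan_iff.mp ha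
  refine ⟨fun j => w j • c, fun j => ?_, fun x => ?_⟩
  · rcases le_or_gt j i with hj | hj
    · exact (C j).smul_mem _ (hc j hj)
    · simp [hw j hj]
  · simp only [vecMul, dotProduct, sum_mul, Pi.smul_apply, smul_eq_mul]
    exact sum_congr rfl fun j _ => by ring

variable [DecidableEq F]

lemma mul_dminS_le_hammingNorm {ι κ μ : Type*} [Fintype ι] [LinearOrder ι] [Fintype κ]
    [Fintype μ] {A : Matrix ι κ F} (hA : LinearIndependent F A.row)
    {Cℓ : Set (μ → F)} {ℓ : ι} {v : ι → μ → F} {p : κ × μ → F}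
    (hp : ∀ x, p x = ∑ i, A i x.1 * v i x.2) (hv : ∀ j, ℓ < j → v j = 0)
    (hvℓ : v ℓ ∈ Cℓ) (hvℓ0 : v ℓ ≠ 0) :
    dminS Cℓ * dminS (leadingRowSpan A ℓ : Set (κ → F)) ≤ hammingNorm p := by
  set dA := dminS (leadingRowSpan A ℓ : Set (κ → F))
  have hcol : ∀ y, v ℓ y ≠ 0 → dA ≤ hammingNorm (fun t => p (t, y)) := by
    intro y hy
    rw [col_eq_vecMul hp y]
    refine dminS_le_hammingNorm (mem_leadingRowSpan_iff.mpr ⟨_, fun j hj => ?_, rfl⟩) ?_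
    · simp [hv j hj]
    · exact fun h0 => hy (congrFun (vecMul_injective_iff.mpr hA (h0.trans (zero_vecMul A).symm)) ℓ)
  calc dminS Cℓ * dA
      ≤ hammingNorm (v ℓ) * dA := Nat.mul_le_mul_right _ (dminS_le_hammingNorm hvℓ hvℓ0)
    _ = ∑ y ∈ univ.filter (v ℓ · ≠ 0), dA := by rw [sum_const, smul_eq_mul]; rfl
    _ ≤ ∑ y ∈ univ.filter (v ℓ · ≠ 0), hammingNorm (fun t => p (t, y)) :=
        sum_le_sum fun y hy => hcol y (mem_filter.mp hy).2
    _ ≤ ∑ y, hammingNorm (fun t => p (t, y)) := sum_le_sum_of_subset (subset_univ _)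
    _ = hammingNorm p := (hammingNorm_eq_sum_hammingNorm_col p).symm

lemma exists_mul_dminS_le_hammingNorm {C : Fin s → Set (Fin m → F)}
    {A : Matrix (Fin s) (Fin h) F} (hA : LinearIndependent F A.row)
    {p : Fin h × Fin m → F} (hpC : p ∈ mpcSet C A) (hp0 : p ≠ 0) :
    ∃ ℓ, dminS (C ℓ) * dminS (leadingRowSpan A ℓ : Set (Fin h → F)) ≤ hammingNorm p := by
  obtain ⟨v, hvC, hp⟩ := hpC
  have hsupp : (univ.filter (v · ≠ 0)).Nonempty := by
    by_contra hempty
    refine hp0 (funext fun x => ?_)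
    simp_all [filter_eq_empty_iff]
  set ℓ := (univ.filter (v · ≠ 0)).max' hsupp
  have hvℓ0 : v ℓ ≠ 0 := (mem_filter.mp (max'_mem _ hsupp)).2
  have hv : ∀ j, ℓ < j → v j = 0 := fun j hj => by
    by_contra hj0
    exact not_le.mpr hj ((univ.filter (v · ≠ 0)).le_max' j (by simp [hj0]))
  exact ⟨ℓ, mul_dminS_le_hammingNorm hA hp hv (hvC ℓ) hvℓ0⟩

lemma dminS_mpcSet_le_mul {C : Fin s → Submodule F (Fin m → F)}
    {A : Matrix (Fin s) (Fin h) F} (hA : LinearIndependent F A.row) {i : Fin s}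
    (hCi : C i ≠ ⊥) (hnest : ∀ j ≤ i, C i ≤ C j) :
    dminS (mpcSet (fun j => (C j : Set (Fin m → F))) A) ≤
      dminS (C i : Set (Fin m → F)) * dminS (leadingRowSpan A i : Set (Fin h → F)) := by
  obtain ⟨c, hc, hc0, hcw⟩ := exists_hammingNorm_eq_dminS ((Submodule.ne_bot_iff _).mp hCi)
  obtain ⟨a, ha, ha0, haw⟩ :=
    exists_hammingNorm_eq_dminS ⟨A i, row_mem_leadingRowSpan A i, hA.ne_zero i⟩
  calc _ ≤ _ := dminS_le_hammingNorm (mul_prod_mem_mpcSet ha fun j hj => hnest j hj hc)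
        (mul_prod_ne_zero ha0 hc0)
    _ = _ := by rw [hammingNorm_mul_prod, hcw, haw, mul_comm]

end MatrixProductCode

theorem stmt2_general {F : Type*} [Field F] [DecidableEq F] {s h m : ℕ}
    (hs : 0 < s)
    (C : Fin s → Submodule F (Fin m → F)) (hnz : ∀ i, C i ≠ ⊥)
    (A : Matrix (Fin s) (Fin h) F) (hA : A.rank = s) :
    (sInf { v | ∃ i : Fin s, v = dminS ((C i : Set (Fin m → F))) *
        dminS ((Submodule.span F { x | ∃ j : Fin s, j ≤ i ∧ x = fun t => A j t } :
          Submodule F (Fin h → F)) : Set (Fin h → F)) }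
      ≤ dminS (mpcSet (fun i => (C i : Set (Fin m → F))) A)) ∧
    ((∀ i j : Fin s, i ≤ j → C j ≤ C i) →
      sInf { v | ∃ i : Fin s, v = dminS ((C i : Set (Fin m → F))) *
        dminS ((Submodule.span F { x | ∃ j : Fin s, j ≤ i ∧ x = fun t => A j t } :
          Submodule F (Fin h → F)) : Set (Fin h → F)) }
      = dminS (mpcSet (fun i => (C i : Set (Fin m → F))) A)) := by
  have hrows : LinearIndependent F A.row :=
    linearIndependent_row_of_rank_eq (by rw [hA, Fintype.card_fin])
  set D := mpcSet (fun i => (C i : Set (Fin m → F))) A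
  set S := {v | ∃ i : Fin s, v = dminS (C i : Set (Fin m → F)) *
    dminS (leadingRowSpan A i : Set (Fin h → F))}
  let i₀ : Fin s := ⟨0, hs⟩
  have hD : ∃ p ∈ D, p ≠ 0 := by
    obtain ⟨c, hc, hc0⟩ := (Submodule.ne_bot_iff _).mp (hnz i₀)
    refine ⟨_, mul_prod_mem_mpcSet (c := c) (row_mem_leadingRowSpan A i₀) fun j hj => ?_, ?_⟩
    · rwa [show j = i₀ from le_antisymm hj (Nat.zero_le j.val)]
    · exact mul_prod_ne_zero (hrows.ne_zero i₀) hc0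
  have hlower : sInf S ≤ dminS D := by
    obtain ⟨p, hpD, hp0, hpw⟩ := exists_hammingNorm_eq_dminS hD
    obtain ⟨ℓ, hℓ⟩ := exists_mul_dminS_le_hammingNorm hrows hpD hp0
    exact hpw ▸ (Nat.sInf_le (s := S) ⟨ℓ, rfl⟩).trans hℓ
  refine ⟨hlower, fun hnest => hlower.antisymm ?_⟩
  have hS : S.Nonempty := ⟨_, i₀, rfl⟩
  obtain ⟨i, hi⟩ := Nat.sInf_mem hS
  exact hi ▸ dminS_mpcSet_le_mul hrows (hnz i) fun j hj => hnest j i hj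

/-- lower bound on the minimum distance of a matrix-product code, with
equality in the nested case. -/
theorem stmt2 {F : Type*} [Field F] [Fintype F] [DecidableEq F] {s h m : ℕ}
    (hs : 0 < s) (hsh : s ≤ h)
    (C : Fin s → Submodule F (Fin m → F)) (hnz : ∀ i, C i ≠ ⊥)
    (A : Matrix (Fin s) (Fin h) F) (hA : A.rank = s) :
    (sInf { v | ∃ i : Fin s, v = dminS ((C i : Set (Fin m → F))) *
        dminS ((Submodule.span F { x | ∃ j : Fin s, j ≤ i ∧ x = fun t => A j t } :
          Submodule F (Fin h → F)) : Set (Fin h → F)) }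
      ≤ dminS (mpcSet (fun i => (C i : Set (Fin m → F))) A)) ∧
    ((∀ i j : Fin s, i ≤ j → C j ≤ C i) →
      sInf { v | ∃ i : Fin s, v = dminS ((C i : Set (Fin m → F))) *
        dminS ((Submodule.span F { x | ∃ j : Fin s, j ≤ i ∧ x = fun t => A j t } :
          Submodule F (Fin h → F)) : Set (Fin h → F)) }
      = dminS (mpcSet (fun i => (C i : Set (Fin m → F))) A)) :=
  stmt2_general hs C hnz A hA
end

section
/- Let q be a power of an odd prime p, fix an enumeration F_q = {α_1 = 0, α_2, …, α_q}, and for i = 1,…,q let w_i = (α_1^{i−1}, …, α_q^{i−1}) ∈ F_q^q (with 0^0 = 1). Define a_ℓ = w_ℓ for 1 ≤ ℓ ≤ q−1 and a_q = w_q + λ w_1, where λ is the image of (p−1)/2 in F_q (so 2λ + 1 = 0). Then for all 1 ≤ i, j ≤ q: ⟨a_i, a_j⟩_E = −1 if i + j = q + 1, and ⟨a_i, a_j⟩_E = 0 if i + j ≠ q + 1. -/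
/-!
Every inner product `⟨a_i, a_j⟩` expands into power sums `∑_{x ∈ F} x ^ k` with
`k ≤ 2(q - 1)`. Such a sum is `-1` when `k` is a positive multiple of `q - 1` and `0`
otherwise, so only `k = q - 1` (that is, `i + j = q + 1`) and `k = 2(q - 1)` (that is,
`i = j = q`) contribute. In `⟨a_q, a_q⟩` the extra `-1` from `⟨w_q, w_q⟩` is cancelled by
the cross terms `2λ⟨w_1, w_q⟩ = 1`.
-/

open Matrix

namespace FiniteField

variable {F : Type*} [Field F] [Fintype F]

theorem sum_pow_of_ne_zero {k : ℕ} (hk : k ≠ 0) :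
    ∑ x : F, x ^ k = if Fintype.card F - 1 ∣ k then -1 else 0 := by
  classical
  rw [← sum_pow_units, Fintype.sum_eq_add_sum_subtype_ne _ 0, zero_pow hk, zero_add]
  exact Fintype.sum_equiv unitsEquivNeZero.symm _ _ fun _ => rfl

theorem sum_pow_of_le_two_mul {k : ℕ} (hk : k ≤ 2 * (Fintype.card F - 1)) :
    ∑ x : F, x ^ k =
      if k = Fintype.card F - 1 ∨ k = 2 * (Fintype.card F - 1) then -1 else 0 := by
  have hq : 0 < Fintype.card F - 1 := Nat.sub_pos_of_lt Fintype.one_lt_card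
  rcases eq_or_ne k 0 with rfl | hk0
  · rw [sum_pow_lt_card_sub_one F 0 hq, if_neg (by omega)]
  have hdvd :
      Fintype.card F - 1 ∣ k ↔ k = Fintype.card F - 1 ∨ k = 2 * (Fintype.card F - 1) := by
    constructor
    · rintro ⟨m, rfl⟩
      have hm : m ≤ 2 := le_of_mul_le_mul_left (by linarith) hq
      interval_cases m <;> simp_all [mul_comm]
    · rintro (h | h) <;> simp [h]
  rw [sum_pow_of_ne_zero hk0]
  exact if_congr hdvd rfl rfl

end FiniteField

theorem two_mul_natCast_half_pred {R : Type*} [Ring R] {p : ℕ} (hodd : Odd p)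
    (hp : (p : R) = 0) : 2 * (((p - 1) / 2 : ℕ) : R) = -1 := by
  obtain ⟨m, rfl⟩ := hodd
  rw [show (2 * m + 1 - 1) / 2 = m by omega]
  push_cast at hp
  exact eq_neg_of_add_eq_zero_left hp

section EvaluationVectors

variable {F : Type*} [Field F] {q p : ℕ} (α : Fin q ≃ F)

theorem av_of_ne {i : ℕ} (hi : i ≠ q) : av α p i = wv α i := if_neg hi

theorem av_self : av α p q = wv α q + (((p - 1) / 2 : ℕ) : F) • wv α 1 := if_pos rfl

variable [Fintype F]

theorem wv_dotProduct_wv (a b : ℕ) :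
    wv α a ⬝ᵥ wv α b = ∑ x : F, x ^ (a - 1 + (b - 1)) := by
  simp only [dotProduct, wv, ← pow_add]
  exact α.sum_comp fun x => x ^ (a - 1 + (b - 1))

theorem wv_dotProduct_wv_of_le {a b : ℕ} (ha1 : 1 ≤ a) (haq : a ≤ q) (hb1 : 1 ≤ b)
    (hbq : b ≤ q) :
    wv α a ⬝ᵥ wv α b = if a + b = q + 1 ∨ a + b = 2 * q then -1 else 0 := by
  have hcard : Fintype.card F = q := by simpa using (Fintype.card_congr α).symm
  rw [wv_dotProduct_wv, FiniteField.sum_pow_of_le_two_mul (by omega)]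
  exact if_congr (by omega) rfl rfl

theorem av_self_dotProduct_wv {j : ℕ} (hj1 : 1 ≤ j) (hjq : j < q) :
    av α p q ⬝ᵥ wv α j = if j = 1 then -1 else 0 := by
  rw [av_self, add_dotProduct, smul_dotProduct,
    wv_dotProduct_wv_of_le α (by omega) le_rfl hj1 hjq.le,
    wv_dotProduct_wv_of_le α le_rfl (by omega) hj1 hjq.le,
    if_neg (show ¬(1 + j = q + 1 ∨ 1 + j = 2 * q) by omega), smul_zero, add_zero]
  exact if_congr (by omega) rfl rfl

theorem av_self_dotProduct_av_self (hodd : Odd p) (hp : (p : F) = 0) :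
    av α p q ⬝ᵥ av α p q = 0 := by
  have hq : 1 < q := by
    simpa using Fintype.one_lt_card.trans_eq (Fintype.card_congr α).symm
  have hw : ∀ a b, 1 ≤ a → a ≤ q → 1 ≤ b → b ≤ q →
      wv α a ⬝ᵥ wv α b = if a + b = q + 1 ∨ a + b = 2 * q then -1 else 0 :=
    fun a b => wv_dotProduct_wv_of_le α
  rw [av_self, add_dotProduct, dotProduct_add, dotProduct_add, smul_dotProduct, dotProduct_smul,
    smul_dotProduct, dotProduct_smul, hw q q (by omega) le_rfl (by omega) le_rfl,
    hw q 1 (by omega) le_rfl le_rfl (by omega), hw 1 q le_rfl (by omega) (by omega) le_rfl,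
    hw 1 1 le_rfl (by omega) le_rfl (by omega), if_pos (by omega), if_pos (by omega),
    if_pos (by omega), if_neg (by omega)]
  simp only [smul_eq_mul, mul_zero, add_zero]
  linear_combination -two_mul_natCast_half_pred hodd hp

theorem av_dotProduct_av (hodd : Odd p) (hp : (p : F) = 0) {i j : ℕ}
    (hi1 : 1 ≤ i) (hiq : i ≤ q) (hj1 : 1 ≤ j) (hjq : j ≤ q) :
    av α p i ⬝ᵥ av α p j = if i + j = q + 1 then -1 else 0 := by
  have hq : 1 < q := by
    simpa using Fintype.one_lt_card.trans_eq (Fintype.card_congr α).symm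
  obtain rfl | hi := eq_or_ne q i
  · obtain rfl | hj := eq_or_ne q j
    · rw [av_self_dotProduct_av_self α hodd hp, if_neg (by omega)]
    · rw [av_of_ne α hj.symm, av_self_dotProduct_wv α hj1 (by omega)]
      exact if_congr (by omega) rfl rfl
  obtain rfl | hj := eq_or_ne q j
  · rw [dotProduct_comm, av_of_ne α hi.symm, av_self_dotProduct_wv α hi1 (by omega)]
    exact if_congr (by omega) rfl rfl
  rw [av_of_ne α hi.symm, av_of_ne α hj.symm, wv_dotProduct_wv_of_le α hi1 hiq hj1 hjq]
  exact if_congr (by omega) rfl rfl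

end EvaluationVectors

theorem stmt6_general {F : Type*} [Field F] [Fintype F] {p n q : ℕ}
    (hp : p.Prime) (hodd : p ≠ 2) (hn : 0 < n) (hq : q = p ^ n)
    (hcard : Fintype.card F = q)
    (α : Fin q ≃ F)
    (i j : ℕ) (hi1 : 1 ≤ i) (hiq : i ≤ q) (hj1 : 1 ≤ j) (hjq : j ≤ q) :
    (i + j = q + 1 → ∑ t, av α p i t * av α p j t = -1) ∧
    (i + j ≠ q + 1 → ∑ t, av α p i t * av α p j t = 0) := by
  have hpF : (p : F) = 0 := by
    have hqF : ((p ^ n : ℕ) : F) = 0 := hq ▸ hcard ▸ FiniteField.cast_card_eq_zero F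
    exact pow_eq_zero_iff hn.ne' |>.mp (by exact_mod_cast hqF)
  have hdot := av_dotProduct_av α (hp.odd_of_ne_two hodd) hpF hi1 hiq hj1 hjq
  exact ⟨fun h => hdot.trans (if_pos h), fun h => hdot.trans (if_neg h)⟩

/-- Euclidean inner products of the vectors `a_1,…,a_q`
(`a_ℓ = w_ℓ` for `ℓ < q`, `a_q = w_q + ((p-1)/2)·w_1`). -/
theorem stmt6 {F : Type*} [Field F] [Fintype F] {p n q : ℕ}
    (hp : p.Prime) (hodd : p ≠ 2) (hn : 0 < n) (hq : q = p ^ n)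
    (hcard : Fintype.card F = q) (hqpos : 0 < q)
    (α : Fin q ≃ F) (h0 : α ⟨0, hqpos⟩ = 0)
    (i j : ℕ) (hi1 : 1 ≤ i) (hiq : i ≤ q) (hj1 : 1 ≤ j) (hjq : j ≤ q) :
    (i + j = q + 1 → ∑ t, av α p i t * av α p j t = -1) ∧
    (i + j ≠ q + 1 → ∑ t, av α p i t * av α p j t = 0) :=
  stmt6_general hp hodd hn hq hcard α i j hi1 hiq hj1 hjq
end

section
/- Let q be a power of an odd prime p, fix an enumeration F_{q²} = {α_1 = 0, α_2, …, α_{q²}}, and for i = 1,…,q² let w_i = (α_1^{i−1}, …, α_{q²}^{i−1}) ∈ F_{q²}^{q²} (with 0^0 = 1). Define a_ℓ = w_ℓ for 1 ≤ ℓ ≤ q²−1 and a_{q²} = w_{q²} + λ w_1, where λ = (p−1)/2 in F_{q²}. Then for all 1 ≤ i, j ≤ q², the Hermitian inner product satisfies: ⟨a_i, a_j⟩_H = −1 if i + j ≠ 2, i + j ≠ 2q², and q(j−1) ≡ q² − i (mod q² − 1); and ⟨a_i, a_j⟩_H = 0 if i + j = 2, or i + j = 2q², or q(j−1) ≢ q²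 − i (mod q² − 1). -/
/-!
With `S k = ∑ x : F, x ^ k`, which is `-1` when `k ≠ 0` and `q² - 1 ∣ k` and `0` otherwise,
the Frobenius `x ↦ x ^ q` turns `⟨a_i, a_j⟩_H` into `S ((i - 1) + q (j - 1))` plus the terms
contributed by `λ`. Since `S k = 0` for `k < q² - 1`, and `q` is invertible modulo `q² - 1`,
those terms vanish unless `i = j = q²`, where they add up to `-2λ = 1` and cancel the main
term. Finally `q² - 1 ∣ (i - 1) + q (j - 1)` is the stated congruence.
-/

open Finset

namespace FiniteField

variable {K : Type*} [Field K] [Fintype K]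

theorem sum_pow_eq_ite (k : ℕ) :
    ∑ x : K, x ^ k = if k ≠ 0 ∧ Fintype.card K - 1 ∣ k then -1 else 0 := by
  classical
  rcases eq_or_ne k 0 with rfl | hk
  · simp
  rw [← Fintype.sum_subtype_add_sum_subtype (· ≠ (0 : K)),
    Fintype.sum_eq_zero (fun x : {x : K // ¬x ≠ 0} ↦ (x : K) ^ k) fun x ↦ by
      simp [not_not.mp x.2, hk],
    add_zero, ← Equiv.sum_comp unitsEquivNeZero]
  simp [hk, sum_pow_units]

theorem sum_pow_of_le_card_sub_one {k : ℕ} (hk : k ≤ Fintype.card K - 1) :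
    ∑ x : K, x ^ k = if k = Fintype.card K - 1 then -1 else 0 := by
  rcases hk.lt_or_eq with hk | rfl
  · rw [sum_pow_lt_card_sub_one K k hk, if_neg hk.ne]
  · have := Fintype.one_lt_card (α := K)
    rw [sum_pow_eq_ite, if_pos ⟨by omega, dvd_rfl⟩, if_pos rfl]

theorem sum_pow_mul_of_coprime {q : ℕ} (hq : q ≠ 0) (hcop : (Fintype.card K - 1).Coprime q)
    (k : ℕ) : ∑ x : K, x ^ (q * k) = ∑ x : K, x ^ k := by
  simp only [sum_pow_eq_ite, ne_eq, mul_eq_zero, hq, false_or, hcop.dvd_mul_left]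

end FiniteField

theorem natCast_pow_char_pow {R : Type*} [CommSemiring R] (p n m : ℕ) [ExpChar R p] :
    (m : R) ^ p ^ n = m := by
  rw [← iterateFrobenius_def, map_natCast]

theorem two_mul_natCast_sub_one_div_two {R : Type*} [Ring R] {p : ℕ} [CharP R p]
    (hp : p.Prime) (hodd : p ≠ 2) : (2 : R) * ((p - 1) / 2 : ℕ) = -1 := by
  rw [← Nat.cast_two, ← Nat.cast_mul, Nat.mul_div_cancel' (hp.even_sub_one hodd).two_dvd,
    Nat.cast_sub hp.one_le, CharP.cast_eq_zero, Nat.cast_one, zero_sub]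

theorem Nat.modEq_iff_dvd_add {n a b c : ℕ} (h : c + b = n) : a ≡ b [MOD n] ↔ n ∣ c + a := by
  have hn : n ≡ 0 [MOD n] := by simp [Nat.ModEq]
  rw [← Nat.ModEq.add_iff_left (Nat.ModEq.refl c), h, ← Nat.modEq_zero_iff_dvd]
  exact ⟨(·.trans hn), (·.trans hn.symm)⟩

theorem Nat.coprime_sq_sub_one_self {q : ℕ} (hq : q ≠ 0) : (q ^ 2 - 1).Coprime q := by
  have : (q ^ 2 - 1).Coprime (q ^ 2) :=
    (Nat.coprime_self_sub_left (Nat.one_le_iff_ne_zero.mpr (pow_ne_zero 2 hq))).mpr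
      (Nat.coprime_one_left _)
  exact this.coprime_dvd_right (dvd_pow_self q two_ne_zero)

theorem av_apply {F : Type*} [Field F] {q : ℕ} (α : Fin q ≃ F) (p i : ℕ) (t : Fin q) :
    av α p i t = α t ^ (i - 1) + ((if i = q then (p - 1) / 2 else 0 : ℕ) : F) := by
  by_cases h : i = q <;> simp [av, wv, h]

section Hermitian

variable {K : Type*} [Field K] [Fintype K] {p n q : ℕ} [Fact p.Prime] [CharP K p]

theorem sum_mul_pow_add_ite (hq : q = p ^ n) (hcard : Fintype.card K = q ^ 2) (c : ℕ)
    {i j : ℕ} (hiq : i ≤ q ^ 2) (hjq : j ≤ q ^ 2) :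
    ∑ x : K, (x ^ (i - 1) + ((if i = q ^ 2 then c else 0 : ℕ) : K)) *
        (x ^ (j - 1) + ((if j = q ^ 2 then c else 0 : ℕ) : K)) ^ q =
      ∑ x : K, x ^ (i - 1 + q * (j - 1)) - if i = q ^ 2 ∧ j = q ^ 2 then 2 * (c : K) else 0 := by
  have hq0 : q ≠ 0 := hq ▸ pow_ne_zero n (Fact.out : p.Prime).ne_zero
  have hfrob (y : K) (m : ℕ) : (y + m) ^ q = y ^ q + m := by
    rw [hq, add_pow_char_pow, natCast_pow_char_pow]
  have hK := Fintype.one_lt_card (α := K)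
  have hi : ∑ x : K, x ^ (i - 1) = if i = q ^ 2 then -1 else 0 := by
    rw [FiniteField.sum_pow_of_le_card_sub_one (by omega)]
    congr 1; apply propext; omega
  have hj : ∑ x : K, x ^ (q * (j - 1)) = if j = q ^ 2 then -1 else 0 := by
    rw [FiniteField.sum_pow_mul_of_coprime hq0 (hcard ▸ Nat.coprime_sq_sub_one_self hq0),
      FiniteField.sum_pow_of_le_card_sub_one (by omega)]
    congr 1; apply propext; omega
  simp_rw [hfrob, ← pow_mul', add_mul, mul_add, ← pow_add, Finset.sum_add_distrib,
    ← Finset.sum_mul, ← Finset.mul_sum, hi, hj, Finset.sum_const, Finset.card_univ,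
    nsmul_eq_mul, FiniteField.cast_card_eq_zero]
  by_cases hi' : i = q ^ 2 <;> by_cases hj' : j = q ^ 2 <;> simp [hi', hj']
  ring

theorem sum_av_mul_av_pow (hodd : p ≠ 2) (hq : q = p ^ n) (hcard : Fintype.card K = q ^ 2)
    (α : Fin (q ^ 2) ≃ K) {i j : ℕ} (hiq : i ≤ q ^ 2) (hjq : j ≤ q ^ 2) :
    ∑ t, av α p i t * av α p j t ^ q =
      ∑ x : K, x ^ (i - 1 + q * (j - 1)) + if i + j = 2 * q ^ 2 then 1 else 0 := by
  simp only [av_apply]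
  rw [Equiv.sum_comp α fun x ↦ (x ^ (i - 1) + ((if i = q ^ 2 then (p - 1) / 2 else 0 : ℕ) : K)) *
      (x ^ (j - 1) + ((if j = q ^ 2 then (p - 1) / 2 else 0 : ℕ) : K)) ^ q,
    sum_mul_pow_add_ite hq hcard _ hiq hjq, two_mul_natCast_sub_one_div_two Fact.out hodd]
  have hboth : i = q ^ 2 ∧ j = q ^ 2 ↔ i + j = 2 * q ^ 2 := by omega
  simp only [hboth]
  split_ifs <;> ring

end Hermitian

theorem sum_pow_sub_one_add_mul_eq_ite {K : Type*} [Field K] [Fintype K] {q i j : ℕ}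
    (hcard : Fintype.card K = q ^ 2) (hq : q ≠ 0)
    (hi1 : 1 ≤ i) (hiq : i ≤ q ^ 2) (hj1 : 1 ≤ j) :
    ∑ x : K, x ^ (i - 1 + q * (j - 1)) =
      if i + j ≠ 2 ∧ q * (j - 1) ≡ q ^ 2 - i [MOD q ^ 2 - 1] then -1 else 0 := by
  have hm : i - 1 + q * (j - 1) ≠ 0 ↔ i + j ≠ 2 := by
    rw [ne_eq, Nat.add_eq_zero_iff, Nat.mul_eq_zero]; omega
  simp only [FiniteField.sum_pow_eq_ite, hcard, hm,
    Nat.modEq_iff_dvd_add (show i - 1 + (q ^ 2 - i) = q ^ 2 - 1 by omega)]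

theorem stmt8_general {F : Type*} [Field F] [Fintype F] {p n q : ℕ}
    (hp : p.Prime) (hodd : p ≠ 2) (hq : q = p ^ n)
    (hcard : Fintype.card F = q ^ 2)
    (α : Fin (q ^ 2) ≃ F)
    (i j : ℕ) (hi1 : 1 ≤ i) (hiq : i ≤ q ^ 2) (hj1 : 1 ≤ j) (hjq : j ≤ q ^ 2) :
    ((i + j ≠ 2 ∧ i + j ≠ 2 * q ^ 2 ∧ q * (j - 1) ≡ q ^ 2 - i [MOD q ^ 2 - 1]) →
      ∑ t, av α p i t * (av α p j t) ^ q = -1) ∧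
    ((i + j = 2 ∨ i + j = 2 * q ^ 2 ∨ ¬ q * (j - 1) ≡ q ^ 2 - i [MOD q ^ 2 - 1]) →
      ∑ t, av α p i t * (av α p j t) ^ q = 0) := by
  have := Fact.mk hp
  have : CharP F p := charP_of_card_eq_prime_pow (hcard.trans (by rw [hq, ← pow_mul]))
  have hq1 : 1 < q := (Nat.one_lt_pow_iff two_ne_zero).mp (hcard ▸ Fintype.one_lt_card)
  rw [sum_av_mul_av_pow hodd hq hcard α hiq hjq,
    sum_pow_sub_one_add_mul_eq_ite hcard (by omega) hi1 hiq hj1]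
  rcases eq_or_ne (i + j) (2 * q ^ 2) with hij | hij
  · obtain ⟨rfl, rfl⟩ : i = q ^ 2 ∧ j = q ^ 2 := by omega
    have hcong : q * (q ^ 2 - 1) ≡ 0 [MOD q ^ 2 - 1] :=
      Nat.modEq_zero_iff_dvd.mpr (dvd_mul_left _ _)
    simp [hcong, ← two_mul, hq1.ne']
  · split_ifs <;> simp_all

/-- Hermitian inner products of the vectors `a_1,…,a_{q²}` over `F_{q²}`. -/
theorem stmt8 {F : Type*} [Field F] [Fintype F] {p n q : ℕ}
    (hp : p.Prime) (hodd : p ≠ 2) (hn : 0 < n) (hq : q = p ^ n)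
    (hcard : Fintype.card F = q ^ 2) (hpos : 0 < q ^ 2)
    (α : Fin (q ^ 2) ≃ F) (h0 : α ⟨0, hpos⟩ = 0)
    (i j : ℕ) (hi1 : 1 ≤ i) (hiq : i ≤ q ^ 2) (hj1 : 1 ≤ j) (hjq : j ≤ q ^ 2) :
    ((i + j ≠ 2 ∧ i + j ≠ 2 * q ^ 2 ∧ q * (j - 1) ≡ q ^ 2 - i [MOD q ^ 2 - 1]) →
      ∑ t, av α p i t * (av α p j t) ^ q = -1) ∧
    ((i + j = 2 ∨ i + j = 2 * q ^ 2 ∨ ¬ q * (j - 1) ≡ q ^ 2 - i [MOD q ^ 2 - 1]) →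
      ∑ t, av α p i t * (av α p j t) ^ q = 0) :=
  stmt8_general hp hodd hq hcard α i j hi1 hiq hj1 hjq
end

section
/- Let q be a power of an odd prime p. With the vectors a_1,…,a_{q²} ∈ F_{q²}^{q²} defined from the evaluations of monomials (a_ℓ = w_ℓ for ℓ < q², a_{q²} = w_{q²} + ((p−1)/2) w_1), let Ä be the q²×q² matrix whose rows are a_1,…,a_{q²}. Then −Ä Ä^† is a permutation matrix, where Ä^† is the conjugate transpose of Ä (entrywise q-th power followed by transpose). Equivalently: for each i ∈ {1,…,q²} there is exactly one j ∈ {1,…,q²} with ⟨a_i, a_j⟩_H = −1, all other Hermitian inner products ⟨a_i, a_{j'}⟩_H vanish, and the map i ↦ j is a bijection of {1,…,q²}. In particular, Ä Ä^† is a monomial matrix. -/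
open Finset

theorem FiniteField.sum_pow_eq_ite_s9 {K : Type*} [Field K] [Fintype K] (k : ℕ) :
    ∑ x : K, x ^ k = if k ≠ 0 ∧ Fintype.card K - 1 ∣ k then -1 else 0 := by
  classical
  rcases eq_or_ne k 0 with rfl | hk
  · simp
  let φ : Kˣ ↪ K := ⟨fun x ↦ x, Units.val_injective⟩
  have huniv : univ.map φ = univ \ {0} := by
    ext x
    simpa only [mem_map, mem_univ, Function.Embedding.coeFn_mk, true_and, mem_sdiff,
      mem_singleton, φ] using
      (show (∃ a : Kˣ, (a : K) = x) ↔ ¬x = 0 from isUnit_iff_ne_zero)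
  calc ∑ x : K, x ^ k = ∑ x ∈ univ \ {(0 : K)}, x ^ k := by
        rw [← sum_sdiff ({0} : Finset K).subset_univ, sum_singleton, zero_pow hk, add_zero]
    _ = ∑ x : Kˣ, (x : K) ^ k := by simp [φ, ← huniv, univ.sum_map φ]
    _ = _ := by simp [FiniteField.sum_pow_units, hk]

lemma natCast_mul_self_eq_one_mod_sq_sub_one {q : ℕ} (hq : q ≠ 0) :
    (q : ZMod (q ^ 2 - 1)) * q = 1 := by
  have : q * q = (q ^ 2 - 1) + 1 := by
    have := Nat.one_le_iff_ne_zero.mpr (pow_ne_zero 2 hq)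
    rw [← sq]; omega
  rw [← Nat.cast_mul, this, Nat.cast_add, ZMod.natCast_self, zero_add, Nat.cast_one]

/-- For `m = q² - 1`, the index `j` with `⟨a_{i+1}, a_{j+1}⟩_H = -1` (rows indexed from `0`). -/
def hermitianPartner (m q i : ℕ) : ℕ :=
  if (i : ZMod m) = 0 then m - i else (-(q * i : ZMod m)).val

section hermitianPartner

variable {m q i j : ℕ}

lemma hermitianPartner_le (hi : i ≤ m) : hermitianPartner m q i ≤ m := by
  unfold hermitianPartner
  split_ifs with h0
  · omega
  · have : NeZero m := ⟨by rintro rfl; simp_all⟩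
    exact (ZMod.val_lt _).le

lemma eq_zero_of_neg_natCast_mul_eq_zero (hq : (q : ZMod m) * q = 1) {x : ZMod m}
    (h : -(q * x) = 0) : x = 0 := by
  linear_combination (-x) * hq - q * h

lemma dvd_add_mul_iff_natCast_eq_neg_mul (hq : (q : ZMod m) * q = 1) :
    m ∣ i + j * q ↔ (j : ZMod m) = -(q * i) := by
  rw [← ZMod.natCast_eq_zero_iff, Nat.cast_add, Nat.cast_mul]
  constructor
  · intro h
    linear_combination (q : ZMod m) * h - (j : ZMod m) * hq
  · intro h
    linear_combination (q : ZMod m) * h - (i : ZMod m) * hq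

lemma natCast_eq_zero_iff_of_le (hi : i ≤ m) : (i : ZMod m) = 0 ↔ i = 0 ∨ i = m := by
  rw [ZMod.natCast_eq_zero_iff]
  constructor
  · rintro ⟨k, rfl⟩
    rcases Nat.lt_or_ge k 1 with hk | hk
    · left; simp [Nat.lt_one_iff.mp hk]
    · right; nlinarith
  · rintro (rfl | rfl) <;> simp

lemma hermitianPartner_hermitianPartner (hq : (q : ZMod m) * q = 1) (hi : i ≤ m) :
    hermitianPartner m q (hermitianPartner m q i) = i := by
  by_cases h0 : (i : ZMod m) = 0
  · have h0' : ((m - i : ℕ) : ZMod m) = 0 := by simp [Nat.cast_sub hi, h0]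
    have e : hermitianPartner m q i = m - i := if_pos h0
    rw [e, hermitianPartner, if_pos h0']
    omega
  · have : NeZero m := ⟨by rintro rfl; simp_all⟩
    have him : i < m := lt_of_le_of_ne hi (by rintro rfl; simp at h0)
    have hj0 : -(q * i : ZMod m) ≠ 0 := fun h ↦ h0 (eq_zero_of_neg_natCast_mul_eq_zero hq h)
    have e : hermitianPartner m q i = (-(q * i : ZMod m)).val := if_neg h0
    have e' : -((q : ZMod m) * -(q * i)) = i := by linear_combination (i : ZMod m) * hq
    rw [e, hermitianPartner, ZMod.natCast_zmod_val, if_neg hj0, e', ZMod.val_cast_of_lt him]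

lemma hermitianPartner_eq_iff (hq : (q : ZMod m) * q = 1) (hq0 : q ≠ 0) (hi : i ≤ m)
    (hj : j ≤ m) (hij : ¬(i = m ∧ j = m)) :
    hermitianPartner m q i = j ↔ i + j * q ≠ 0 ∧ m ∣ i + j * q := by
  have hnz : i + j * q ≠ 0 ↔ ¬(i = 0 ∧ j = 0) := by simp [hq0]
  rw [hnz, dvd_add_mul_iff_natCast_eq_neg_mul hq]
  by_cases h0 : (i : ZMod m) = 0
  · have e : hermitianPartner m q i = m - i := if_pos h0
    rw [e, h0, mul_zero, neg_zero, natCast_eq_zero_iff_of_le hj]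
    rw [natCast_eq_zero_iff_of_le hi] at h0
    omega
  · have : NeZero m := ⟨by rintro rfl; simp_all⟩
    have e : hermitianPartner m q i = (-(q * i : ZMod m)).val := if_neg h0
    have hi0 : i ≠ 0 := by rintro rfl; simp at h0
    simp only [e, hi0, false_and, not_false_eq_true, true_and]
    constructor
    · rintro rfl
      exact ZMod.natCast_zmod_val _
    · intro h
      have hjm : j < m := lt_of_le_of_ne hj (by
        rintro rfl
        exact h0 (eq_zero_of_neg_natCast_mul_eq_zero hq (by rw [← h, ZMod.natCast_self])))
      rw [← h, ZMod.val_cast_of_lt hjm]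

end hermitianPartner

def hermitianPartnerPerm (N q : ℕ) (hq : (q : ZMod (N - 1)) * q = 1) : Equiv.Perm (Fin N) :=
  Function.Involutive.toPerm
    (fun i ↦ ⟨hermitianPartner (N - 1) q i, by
      have := hermitianPartner_le (q := q) (Nat.le_sub_one_of_lt i.isLt)
      have := i.isLt
      omega⟩)
    fun i ↦ Fin.ext (hermitianPartner_hermitianPartner hq (Nat.le_sub_one_of_lt i.isLt))

lemma Adot_apply {F : Type*} [Field F] {N : ℕ} (α : Fin N ≃ F) (p : ℕ) (i t : Fin N) :
    Adot α p i t = α t ^ (i : ℕ) + ((if (i : ℕ) = N - 1 then (p - 1) / 2 else 0 : ℕ) : F) := by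
  have hi := i.isLt
  simp only [Adot, av, Matrix.of_apply]
  split_ifs with h1 h2 h2
  · simp [wv, show N - 1 = i by omega]
  · omega
  · omega
  · simp [wv]

lemma natCast_half_pred_add_self {F : Type*} [AddGroupWithOne F] {p : ℕ} [CharP F p]
    (hp : Odd p) : (((p - 1) / 2 : ℕ) : F) + (((p - 1) / 2 : ℕ) : F) = -1 := by
  obtain ⟨t, rfl⟩ := hp
  rw [← Nat.cast_add, show (2 * t + 1 - 1) / 2 + (2 * t + 1 - 1) / 2 = 2 * t + 1 - 1 by omega,
    Nat.cast_sub (by omega), CharP.cast_eq_zero, Nat.cast_one, zero_sub]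

section GramEntries

variable {F : Type*} [Field F] [Fintype F] {p n : ℕ} [Fact p.Prime] [CharP F p]

lemma Adot_mul_frobenius_transpose_apply {N : ℕ} (α : Fin N ≃ F) (i j : Fin N) :
    (Adot α p * ((Adot α p).map (fun x ↦ x ^ p ^ n)).transpose) i j =
      ∑ x : F, x ^ ((i : ℕ) + j * p ^ n)
        + ((if (j : ℕ) = N - 1 then (p - 1) / 2 else 0 : ℕ) : F) * ∑ x : F, x ^ (i : ℕ)
        + ((if (i : ℕ) = N - 1 then (p - 1) / 2 else 0 : ℕ) : F)
          * ∑ x : F, x ^ ((j : ℕ) * p ^ n) := by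
  have hN : (N : F) = 0 := by
    rw [← Fintype.card_fin N, Fintype.card_congr α]; exact FiniteField.cast_card_eq_zero F
  have hfrob (k : ℕ) : (k : F) ^ p ^ n = k := map_natCast (iterateFrobenius F p n) k
  simp only [Matrix.mul_apply, Matrix.transpose_apply, Matrix.map_apply, Adot_apply,
    add_pow_char_pow, hfrob, ← pow_mul, mul_add, add_mul, ← pow_add, sum_add_distrib, ← sum_mul,
    ← mul_sum, sum_const, card_univ, Fintype.card_fin, nsmul_eq_mul, hN, zero_mul]
  rw [Equiv.sum_comp α (fun x ↦ x ^ ((i : ℕ) + j * p ^ n)),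
    Equiv.sum_comp α (fun x ↦ x ^ (i : ℕ)), Equiv.sum_comp α (fun x ↦ x ^ ((j : ℕ) * p ^ n))]
  ring

lemma Adot_mul_frobenius_transpose_apply_last_last (hodd : Odd p)
    (hcard : Fintype.card F = (p ^ n) ^ 2) (α : Fin ((p ^ n) ^ 2) ≃ F) {i j : Fin ((p ^ n) ^ 2)}
    (hi : (i : ℕ) = (p ^ n) ^ 2 - 1) (hj : (j : ℕ) = (p ^ n) ^ 2 - 1) :
    (Adot α p * ((Adot α p).map (fun x ↦ x ^ p ^ n)).transpose) i j = 0 := by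
  have hm0 : (p ^ n) ^ 2 - 1 ≠ 0 := Nat.sub_ne_zero_of_lt (hcard ▸ Fintype.one_lt_card)
  have hq0 : p ^ n ≠ 0 := pow_ne_zero n (Fact.out : p.Prime).ne_zero
  rw [Adot_mul_frobenius_transpose_apply, FiniteField.sum_pow_eq_ite_s9, FiniteField.sum_pow_eq_ite_s9,
    FiniteField.sum_pow_eq_ite_s9, hcard, if_pos hi, if_pos hj, hi, hj,
    if_pos ⟨by simp [hm0], Dvd.intro (1 + p ^ n) (by ring)⟩, if_pos ⟨hm0, dvd_rfl⟩,
    if_pos ⟨mul_ne_zero hm0 hq0, Dvd.intro _ rfl⟩]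
  linear_combination (-1 : F) * natCast_half_pred_add_self (F := F) hodd

lemma Adot_mul_frobenius_transpose_apply_of_not_last_last (hcard : Fintype.card F = (p ^ n) ^ 2)
    (α : Fin ((p ^ n) ^ 2) ≃ F) {i j : Fin ((p ^ n) ^ 2)}
    (hij : ¬((i : ℕ) = (p ^ n) ^ 2 - 1 ∧ (j : ℕ) = (p ^ n) ^ 2 - 1)) :
    (Adot α p * ((Adot α p).map (fun x ↦ x ^ p ^ n)).transpose) i j =
      if (i : ℕ) + j * p ^ n ≠ 0 ∧ (p ^ n) ^ 2 - 1 ∣ i + j * p ^ n then -1 else 0 := by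
  set m := (p ^ n) ^ 2 - 1 with hm
  have hi : (i : ℕ) ≤ m := Nat.le_sub_one_of_lt i.isLt
  have hj : (j : ℕ) ≤ m := Nat.le_sub_one_of_lt j.isLt
  have hcop : Nat.Coprime (p ^ n) m :=
    (ZMod.isUnit_iff_coprime _ _).1 (IsUnit.of_mul_eq_one _ (natCast_mul_self_eq_one_mod_sq_sub_one
      (pow_ne_zero n (Fact.out : p.Prime).ne_zero)))
  have hlt {k : ℕ} (hk : k < m) : ¬(k ≠ 0 ∧ m ∣ k) := fun h ↦
    h.1 (Nat.eq_zero_of_dvd_of_lt h.2 hk)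
  rw [Adot_mul_frobenius_transpose_apply, FiniteField.sum_pow_eq_ite_s9, FiniteField.sum_pow_eq_ite_s9,
    FiniteField.sum_pow_eq_ite_s9, hcard, ← hm]
  have hc₁ : ((if (j : ℕ) = m then (p - 1) / 2 else 0 : ℕ) : F)
      * (if (i : ℕ) ≠ 0 ∧ m ∣ i then -1 else 0) = 0 := by
    rcases eq_or_ne (j : ℕ) m with hj' | hj'
    · rw [if_neg (hlt (lt_of_le_of_ne hi fun h ↦ hij ⟨h, hj'⟩)), mul_zero]
    · rw [if_neg hj', Nat.cast_zero, zero_mul]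
  have hc₂ : ((if (i : ℕ) = m then (p - 1) / 2 else 0 : ℕ) : F)
      * (if (j : ℕ) * p ^ n ≠ 0 ∧ m ∣ j * p ^ n then -1 else 0) = 0 := by
    rcases eq_or_ne (i : ℕ) m with hi' | hi'
    · have hdiv : ¬((j : ℕ) * p ^ n ≠ 0 ∧ m ∣ j * p ^ n) := fun h ↦
        hlt (lt_of_le_of_ne hj fun h' ↦ hij ⟨hi', h'⟩)
          ⟨left_ne_zero_of_mul h.1, hcop.symm.dvd_of_dvd_mul_right h.2⟩
      rw [if_neg hdiv, mul_zero]
    · rw [if_neg hi', Nat.cast_zero, zero_mul]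
  rw [hc₁, hc₂, add_zero, add_zero]

lemma Adot_mul_frobenius_transpose_apply_eq_ite (hodd : Odd p)
    (hcard : Fintype.card F = (p ^ n) ^ 2) (α : Fin ((p ^ n) ^ 2) ≃ F) (i j : Fin ((p ^ n) ^ 2)) :
    (Adot α p * ((Adot α p).map (fun x ↦ x ^ p ^ n)).transpose) i j =
      if hermitianPartner ((p ^ n) ^ 2 - 1) (p ^ n) i = j then -1 else 0 := by
  have hq0 : p ^ n ≠ 0 := pow_ne_zero n (Fact.out : p.Prime).ne_zero
  by_cases hij : (i : ℕ) = (p ^ n) ^ 2 - 1 ∧ (j : ℕ) = (p ^ n) ^ 2 - 1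
  · have hm0 : (p ^ n) ^ 2 - 1 ≠ 0 := Nat.sub_ne_zero_of_lt (hcard ▸ Fintype.one_lt_card)
    rw [Adot_mul_frobenius_transpose_apply_last_last hodd hcard α hij.1 hij.2, if_neg]
    simp [hermitianPartner, hij.1, hij.2, hm0.symm]
  · rw [Adot_mul_frobenius_transpose_apply_of_not_last_last hcard α hij]
    exact if_congr (hermitianPartner_eq_iff (natCast_mul_self_eq_one_mod_sq_sub_one hq0) hq0
      (Nat.le_sub_one_of_lt i.isLt) (Nat.le_sub_one_of_lt j.isLt) hij).symm rfl rfl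

end GramEntries

theorem stmt9_general {F : Type*} [Field F] [Fintype F] {p n q : ℕ}
    (hp : p.Prime) (hodd : p ≠ 2) (hq : q = p ^ n)
    (hcard : Fintype.card F = q ^ 2)
    (α : Fin (q ^ 2) ≃ F) :
    (∃ σ : Equiv.Perm (Fin (q ^ 2)),
      ∀ i j : Fin (q ^ 2),
        -((Adot α p * ((Adot α p).map (fun x => x ^ q)).transpose) i j) =
          if σ i = j then 1 else 0) ∧
    (∃ (d : Fin (q ^ 2) → F) (σ : Equiv.Perm (Fin (q ^ 2))), (∀ i, d i ≠ 0) ∧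
      ∀ i j : Fin (q ^ 2),
        (Adot α p * ((Adot α p).map (fun x => x ^ q)).transpose) i j =
          if σ j = i then d i else 0) := by
  subst hq
  have := Fact.mk hp
  have : CharP F p := charP_of_card_eq_prime_pow (f := n * 2) (by rw [hcard, pow_mul])
  set σ := hermitianPartnerPerm ((p ^ n) ^ 2) (p ^ n)
    (natCast_mul_self_eq_one_mod_sq_sub_one (pow_ne_zero n hp.ne_zero))
  have hσ : σ.symm = σ := Function.Involutive.toPerm_symm _
  have hM (i j) : (Adot α p * ((Adot α p).map (fun x => x ^ p ^ n)).transpose) i j =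
      if σ i = j then -1 else 0 := by
    rw [Adot_mul_frobenius_transpose_apply_eq_ite (hp.odd_of_ne_two hodd) hcard]
    exact if_congr (Fin.ext_iff (a := σ i)).symm rfl rfl
  refine ⟨⟨σ, fun i j ↦ ?_⟩, fun _ ↦ -1, σ, fun _ ↦ neg_ne_zero.mpr one_ne_zero,
    fun i j ↦ ?_⟩
  · rw [hM]
    split_ifs <;> simp
  · rw [hM]
    exact if_congr (by rw [← Equiv.eq_symm_apply, hσ, eq_comm]) rfl rfl

/-- `-Ä Ä†` is a permutation matrix, where `Ä` is the `q²×q²` matrix with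
rows `a_1,…,a_{q²}` and `†` is entrywise `q`-th power followed by transpose; equivalently,
for each `i` there is exactly one `j` with `⟨a_i,a_j⟩_H = -1` and all other Hermitian
inner products vanish, the map `i ↦ j` being a bijection. In particular `Ä Ä†` is a
monomial matrix. -/
theorem stmt9 {F : Type*} [Field F] [Fintype F] {p n q : ℕ}
    (hp : p.Prime) (hodd : p ≠ 2) (hn : 0 < n) (hq : q = p ^ n)
    (hcard : Fintype.card F = q ^ 2) (hpos : 0 < q ^ 2)
    (α : Fin (q ^ 2) ≃ F) (h0 : α ⟨0, hpos⟩ = 0) :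
    (∃ σ : Equiv.Perm (Fin (q ^ 2)),
      ∀ i j : Fin (q ^ 2),
        -((Adot α p * ((Adot α p).map (fun x => x ^ q)).transpose) i j) =
          if σ i = j then 1 else 0) ∧
    (∃ (d : Fin (q ^ 2) → F) (σ : Equiv.Perm (Fin (q ^ 2))), (∀ i, d i ≠ 0) ∧
      ∀ i j : Fin (q ^ 2),
        (Adot α p * ((Adot α p).map (fun x => x ^ q)).transpose) i j =
          if σ j = i then d i else 0) :=
  stmt9_general hp hodd hq hcard α
end
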